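/- For i = 1,2, let q_i(x,ξ) = (1/2) c_i(x) ξ² + 2 ∫_{(0,∞)} (1 − cos(ξ y)) ν_i(x,dy) be one-dimensional symmetric symbols (bounded c_i ≥ 0, Lévy kernels ν_i with sup_x ∫ min{1,y²} ν_i(x,dy) < ∞). Assume there exists m > 0 such that ν_1(x, B ∩ (m,∞)) ≥ ν_2(x, B ∩ (m,∞)) for all x ∈ ℝ and all Borel B ⊆ (0,∞). Then: (a) if ∫_{{|ξ|<r}} dξ / sup_{x∈ℝ} q_1(x,ξ) = ∞ for every r > 0, then ∫_{{|ξ|<r}} dξ / sup_{x∈ℝ} q_2(x,ξ) = ∞ for every r > 0; (b) if lim_{ξ→0} inf_{x∈ℝ} q_2(x,ξ)/ξ² = ∞ and ∫_{{|ξ|<r}} dξ / inf_{x∈ℝ} q_2(x,ξ) < ∞ for some r > 0, then lim_{ξ→0} inf_{x∈ℝ} q_1(x,ξ)/ξ² = ∞ and ∫_{{|ξ|<r}} dξ / inf_{x∈ℝ} q_1(x,ξ) < ∞ for some r > 0. -/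

import Mathlib

/-!
Splitting the jumps of `ν₂` at `m`, the small ones contribute at most a multiple of `ξ²`
(as `1 - cos t ≤ t² / 2`) and the large ones are dominated by those of `ν₁`, so
`q₂(x, ξ) ≤ a ξ² + q₁(x, ξ)` with a finite constant `a`. Part (b) follows at once: near `0`
the term `a ξ²` is negligible against `inf q₂`.

For part (a), `G = sup q₁` is even, lower semicontinuous and satisfies `G (2ξ) ≤ 4 G ξ`.
If `G` has zeros accumulating at `0⁺`, then `c₁ x = 0` and `ν₁ x` vanishes on `(0, ∞)`, so
`G = 0` and `1 / (a ξ²)` is not integrable at `0`. Otherwise `G` is bounded below by some `ε > 0` on an interval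
`[δ/2, δ]`, the doubling inequality propagates this to `G ξ ≥ ε ξ² / δ²` on `(-δ, δ)`, and
`a ξ² + G ≤ C G` there.
-/

open MeasureTheory Filter Topology
open scoped ENNReal

noncomputable def oneDimSymbol (c : ℝ → ℝ) (ν : ℝ → MeasureTheory.Measure ℝ)
    (x ξ : ℝ) : ℝ≥0∞ :=
  ENNReal.ofReal ((1 / 2) * c x * ξ ^ 2) +
    2 * ∫⁻ y in Set.Ioi (0 : ℝ), ENNReal.ofReal (1 - Real.cos (ξ * y)) ∂(ν x)

open Set

lemma one_sub_cos_two_mul_le (t : ℝ) : 1 - Real.cos (2 * t) ≤ 4 * (1 - Real.cos t) := by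
  rw [Real.cos_two_mul]
  nlinarith [Real.cos_le_one t, Real.neg_one_le_cos t]

lemma cos_ne_one_of_pos_of_lt {t : ℝ} (h0 : 0 < t) (h2π : t < 2 * Real.pi) : Real.cos t ≠ 1 :=
  fun h => h0.ne' ((Real.cos_eq_one_iff_of_lt_of_lt (by linarith [Real.pi_pos]) h2π).mp h)

lemma sq_le_max_mul_min {y m : ℝ} (hy0 : 0 ≤ y) (hym : y ≤ m) :
    y ^ 2 ≤ max 1 (m ^ 2) * min 1 (y ^ 2) := by
  rcases le_total (y ^ 2) 1 with h | h
  · rw [min_eq_right h]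
    nlinarith [le_max_left 1 (m ^ 2), sq_nonneg y]
  · rw [min_eq_left h, mul_one]
    exact (pow_le_pow_left₀ hy0 hym 2).trans (le_max_right _ _)

lemma lintegral_inv_eq_top_of_ae_le_mul {α : Type*} [MeasurableSpace α] {μ : Measure α}
    {f g : α → ℝ≥0∞} {C : ℝ≥0∞} (hC : C ≠ ∞) (hfg : ∀ᵐ z ∂μ, f z ≤ C * g z)
    (hg : ∫⁻ z, (g z)⁻¹ ∂μ = ∞) : ∫⁻ z, (f z)⁻¹ ∂μ = ∞ := by
  have hinv : ∀ᵐ z ∂μ, C⁻¹ * (g z)⁻¹ ≤ (f z)⁻¹ := by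
    filter_upwards [hfg] with z hz
    rcases eq_or_ne (g z) ∞ with hgz | hgz
    · simp [hgz]
    · rw [← ENNReal.mul_inv (Or.inr hgz) (Or.inl hC)]
      exact ENNReal.inv_le_inv' hz
  refine top_le_iff.mp ?_
  calc ∞ = C⁻¹ * ∫⁻ z, (g z)⁻¹ ∂μ := by rw [hg, ENNReal.mul_top (ENNReal.inv_ne_zero.mpr hC)]
    _ ≤ ∫⁻ z, C⁻¹ * (g z)⁻¹ ∂μ := lintegral_const_mul_le _ _
    _ ≤ _ := lintegral_mono_ae hinv

lemma lintegral_ball_inv_sq_eq_top {r : ℝ} (hr : 0 < r) :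
    ∫⁻ ξ in Metric.ball 0 r, (ENNReal.ofReal (ξ ^ 2))⁻¹ = ∞ := by
  have hIoo : ∫⁻ ξ in Ioo 0 r, ENNReal.ofReal (ξ ^ (-2 : ℝ)) = ∞ := by
    by_contra h
    have hint := (lintegral_ofReal_ne_top_iff_integrable
      (by fun_prop : Measurable fun ξ : ℝ => ξ ^ (-2 : ℝ)).aestronglyMeasurable ?_).mp h
    · have := (intervalIntegral.integrableOn_Ioo_rpow_iff hr).mp hint
      norm_num at this
    · filter_upwards [ae_restrict_mem measurableSet_Ioo] with ξ hξ
      exact Real.rpow_nonneg hξ.1.le _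
  refine top_le_iff.mp (hIoo ▸ ?_)
  calc ∫⁻ ξ in Ioo 0 r, ENNReal.ofReal (ξ ^ (-2 : ℝ))
      = ∫⁻ ξ in Ioo 0 r, (ENNReal.ofReal (ξ ^ 2))⁻¹ := by
        refine setLIntegral_congr_fun measurableSet_Ioo fun ξ hξ => ?_
        rw [Real.rpow_neg hξ.1.le, Real.rpow_two, ENNReal.ofReal_inv_of_pos (pow_pos hξ.1 2)]
    _ ≤ _ := lintegral_mono_set fun ξ hξ => by
        simpa [abs_of_pos hξ.1] using hξ.2

lemma ofReal_mul_sq_le_of_two_mul_le {G : ℝ → ℝ≥0∞} (hG : ∀ ξ, G (2 * ξ) ≤ 4 * G ξ)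
    {δ ε : ℝ} (hδ : 0 < δ) (hε0 : 0 ≤ ε) (hε : ∀ η ∈ Icc (δ / 2) δ, ENNReal.ofReal ε ≤ G η)
    {ξ : ℝ} (hξ : ξ ∈ Ioc 0 δ) : ENNReal.ofReal (ε / δ ^ 2 * ξ ^ 2) ≤ G ξ := by
  have hdyadic : ∀ n : ℕ, ∀ ξ ∈ Icc (δ / 2 ^ (n + 1)) δ,
      ENNReal.ofReal (ε / δ ^ 2 * ξ ^ 2) ≤ G ξ := by
    intro n
    induction n with
    | zero =>
      intro ξ hξ
      refine le_trans (ENNReal.ofReal_le_ofReal ?_) (hε ξ (by simpa using hξ))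
      rw [div_mul_eq_mul_div, div_le_iff₀ (by positivity)]
      have : ξ ^ 2 ≤ δ ^ 2 := pow_le_pow_left₀ (by linarith [hξ.1, half_pos hδ]) hξ.2 2
      exact mul_le_mul_of_nonneg_left this hε0
    | succ n ih =>
      intro ξ hξ
      by_cases hhalf : δ / 2 ≤ ξ
      · exact ih ξ ⟨le_trans (div_le_div_of_nonneg_left hδ.le (by positivity)
          (by simpa using pow_le_pow_right₀ one_le_two (Nat.le_add_left 1 n))) hhalf, hξ.2⟩
      · have h2ξ : 2 * ξ ∈ Icc (δ / 2 ^ (n + 1)) δ := by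
          constructor
          · have := hξ.1
            rw [pow_succ] at this
            rw [div_le_iff₀ (by positivity)] at this ⊢
            linarith
          · linarith
        have h4 : 4 * ENNReal.ofReal (ε / δ ^ 2 * ξ ^ 2) ≤ 4 * G ξ := by
          calc 4 * ENNReal.ofReal (ε / δ ^ 2 * ξ ^ 2)
              = ENNReal.ofReal (ε / δ ^ 2 * (2 * ξ) ^ 2) := by
                rw [← ENNReal.ofReal_ofNat 4, ← ENNReal.ofReal_mul (by norm_num)]
                ring_nf
            _ ≤ G (2 * ξ) := ih _ h2ξ
            _ ≤ 4 * G ξ := hG ξ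
        exact (ENNReal.mul_le_mul_iff_right (by norm_num) (by norm_num)).mp h4
  obtain ⟨n, hn⟩ := pow_unbounded_of_one_lt (δ / ξ) one_lt_two
  refine hdyadic n ξ ⟨?_, hξ.2⟩
  rw [div_lt_iff₀ hξ.1] at hn
  rw [div_le_iff₀ (by positivity), pow_succ]
  nlinarith [hξ.1]

section DoublingFunction

variable {G : ℝ → ℝ≥0∞} {a : ℝ≥0∞} {r : ℝ}

lemma lintegral_ball_inv_sq_add_eq_top_of_ne_zero (heven : ∀ ξ, G (-ξ) = G ξ)
    (hdouble : ∀ ξ, G (2 * ξ) ≤ 4 * G ξ) (hlsc : LowerSemicontinuous G) {u : ℝ} (hu : 0 < u)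
    (hpos : ∀ η ∈ Ioo 0 u, G η ≠ 0) (ha : a ≠ ∞)
    (hG : ∀ r > 0, ∫⁻ ξ in Metric.ball 0 r, (G ξ)⁻¹ = ∞) (hr : 0 < r) :
    ∫⁻ ξ in Metric.ball 0 r, (a * ENNReal.ofReal (ξ ^ 2) + G ξ)⁻¹ = ∞ := by
  obtain ⟨δ, hδ, hδu, hδr⟩ : ∃ δ, 0 < δ ∧ δ < u ∧ δ < r :=
    ⟨min u r / 2, by positivity, by linarith [min_le_left u r], by linarith [min_le_right u r]⟩
  obtain ⟨η, hη, hmin⟩ := (hlsc.lowerSemicontinuousOn (Icc (δ / 2) δ)).exists_isMinOn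
    (nonempty_Icc.mpr (half_le_self hδ.le)) isCompact_Icc
  have hGη : 0 < G η := pos_iff_ne_zero.mpr
    (hpos η ⟨(half_pos hδ).trans_le hη.1, hη.2.trans_lt hδu⟩)
  obtain ⟨ε, hε0, hεpos, hεη⟩ := ENNReal.lt_iff_exists_real_btwn.mp hGη
  have hε : 0 < ε := ENNReal.ofReal_pos.mp hεpos
  have hlow : ∀ ξ ∈ Metric.ball (0 : ℝ) δ, ENNReal.ofReal (ε / δ ^ 2 * ξ ^ 2) ≤ G ξ := by
    intro ξ hξ
    rcases eq_or_ne ξ 0 with rfl | hξ0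
    · simp
    have habs : |ξ| ∈ Ioc 0 δ := ⟨abs_pos.mpr hξ0, (mem_ball_zero_iff.mp hξ).le⟩
    have := ofReal_mul_sq_le_of_two_mul_le hdouble hδ hε0
      (fun ζ hζ => hεη.le.trans (hmin hζ)) habs
    rcases abs_choice ξ with h | h <;> rw [h] at this <;> simpa [heven] using this
  have hcomp : ∀ ξ ∈ Metric.ball (0 : ℝ) δ,
      a * ENNReal.ofReal (ξ ^ 2) + G ξ ≤ (a * ENNReal.ofReal (δ ^ 2 / ε) + 1) * G ξ := by
    intro ξ hξ
    have hsq : ENNReal.ofReal (ξ ^ 2)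
        = ENNReal.ofReal (δ ^ 2 / ε) * ENNReal.ofReal (ε / δ ^ 2 * ξ ^ 2) := by
      rw [← ENNReal.ofReal_mul (by positivity)]
      congr 1
      field_simp
    rw [add_mul, one_mul, hsq, ← mul_assoc]
    gcongr
    exact hlow ξ hξ
  refine top_le_iff.mp ((lintegral_inv_eq_top_of_ae_le_mul (by finiteness)
    ((ae_restrict_mem measurableSet_ball).mono hcomp) (hG δ hδ)).symm.le.trans ?_)
  exact lintegral_mono_set (Metric.ball_subset_ball hδr.le)

lemma lintegral_ball_inv_sq_add_eq_top (heven : ∀ ξ, G (-ξ) = G ξ)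
    (hdouble : ∀ ξ, G (2 * ξ) ≤ 4 * G ξ) (hlsc : LowerSemicontinuous G)
    (hzero : (∃ᶠ η in 𝓝[>] 0, G η = 0) → ∀ ξ, G ξ = 0) (ha : a ≠ ∞)
    (hG : ∀ r > 0, ∫⁻ ξ in Metric.ball 0 r, (G ξ)⁻¹ = ∞) (hr : 0 < r) :
    ∫⁻ ξ in Metric.ball 0 r, (a * ENNReal.ofReal (ξ ^ 2) + G ξ)⁻¹ = ∞ := by
  by_cases hfreq : ∃ᶠ η in 𝓝[>] 0, G η = 0
  · refine lintegral_inv_eq_top_of_ae_le_mul ha (ae_of_all _ fun ξ => ?_)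
      (lintegral_ball_inv_sq_eq_top hr)
    rw [hzero hfreq ξ, add_zero]
  · obtain ⟨u, hu, hsub⟩ := mem_nhdsGT_iff_exists_Ioo_subset.mp (not_frequently.mp hfreq)
    exact lintegral_ball_inv_sq_add_eq_top_of_ne_zero heven hdouble hlsc hu hsub ha hG hr

end DoublingFunction

section Comparison

variable {f g : ℝ → ℝ≥0∞} {a : ℝ≥0∞}

lemma div_sq_le_add_div_sq {ξ : ℝ} (hfg : g ξ ≤ a * ENNReal.ofReal (ξ ^ 2) + f ξ)
    (hξ : ξ ≠ 0) : g ξ / ENNReal.ofReal (ξ ^ 2) ≤ a + f ξ / ENNReal.ofReal (ξ ^ 2) := by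
  have hsq : ENNReal.ofReal (ξ ^ 2) ≠ 0 := by simpa using hξ
  calc g ξ / ENNReal.ofReal (ξ ^ 2)
      ≤ (a * ENNReal.ofReal (ξ ^ 2) + f ξ) / ENNReal.ofReal (ξ ^ 2) := by gcongr
    _ = _ := by rw [ENNReal.add_div, ENNReal.mul_div_cancel_right hsq ENNReal.ofReal_ne_top]

lemma tendsto_div_sq_top_of_le_add (ha : a ≠ ∞)
    (hfg : ∀ ξ, g ξ ≤ a * ENNReal.ofReal (ξ ^ 2) + f ξ)
    (hg : Tendsto (fun ξ => g ξ / ENNReal.ofReal (ξ ^ 2)) (𝓝[≠] 0) (𝓝 ∞)) :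
    Tendsto (fun ξ => f ξ / ENNReal.ofReal (ξ ^ 2)) (𝓝[≠] 0) (𝓝 ∞) := by
  have hsub : Tendsto (fun ξ => g ξ / ENNReal.ofReal (ξ ^ 2) - a) (𝓝[≠] 0) (𝓝 ∞) := by
    simpa [ENNReal.top_sub ha] using ENNReal.Tendsto.sub hg tendsto_const_nhds (Or.inr ha)
  refine tendsto_nhds_top_mono hsub ?_
  filter_upwards [self_mem_nhdsWithin] with ξ hξ
  exact tsub_le_iff_left.mpr (div_sq_le_add_div_sq (hfg ξ) hξ)

lemma eventually_inv_le_two_mul_inv (ha : a ≠ ∞)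
    (hfg : ∀ ξ, g ξ ≤ a * ENNReal.ofReal (ξ ^ 2) + f ξ)
    (hg : Tendsto (fun ξ => g ξ / ENNReal.ofReal (ξ ^ 2)) (𝓝[≠] 0) (𝓝 ∞)) :
    ∀ᶠ ξ in 𝓝[≠] 0, (f ξ)⁻¹ ≤ 2 * (g ξ)⁻¹ := by
  filter_upwards [hg.eventually (Ioi_mem_nhds (by finiteness : 2 * a < ∞)),
    self_mem_nhdsWithin] with ξ hlt hξ
  have hsq : ENNReal.ofReal (ξ ^ 2) ≠ 0 := by simpa using hξ
  have h2a : 2 * a * ENNReal.ofReal (ξ ^ 2) ≤ g ξ :=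
    ((ENNReal.lt_div_iff_mul_lt (Or.inl hsq) (Or.inl ENNReal.ofReal_ne_top)).mp hlt).le
  have hg2f : g ξ ≤ 2 * f ξ := by
    rcases eq_or_ne (g ξ) ∞ with hgξ | hgξ
    · have := hfg ξ
      rw [hgξ, top_le_iff, ENNReal.add_eq_top] at this
      simp [this.resolve_left (by finiteness)]
    · refine (ENNReal.add_le_add_iff_left hgξ).mp ?_
      calc g ξ + g ξ ≤ 2 * (a * ENNReal.ofReal (ξ ^ 2) + f ξ) := by
            rw [← two_mul]; gcongr; exact hfg ξ
        _ = 2 * a * ENNReal.ofReal (ξ ^ 2) + 2 * f ξ := by ring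
        _ ≤ g ξ + 2 * f ξ := by gcongr
  rw [ENNReal.inv_le_iff_inv_le, ENNReal.mul_inv (by simp) (by simp), inv_inv]
  rwa [ENNReal.inv_mul_le_iff (by simp) (by simp)]

lemma exists_lintegral_ball_inv_lt_top_of_le_add (ha : a ≠ ∞)
    (hfg : ∀ ξ, g ξ ≤ a * ENNReal.ofReal (ξ ^ 2) + f ξ)
    (hg : Tendsto (fun ξ => g ξ / ENNReal.ofReal (ξ ^ 2)) (𝓝[≠] 0) (𝓝 ∞))
    (hgint : ∃ r > (0 : ℝ), ∫⁻ ξ in Metric.ball 0 r, (g ξ)⁻¹ < ∞) :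
    ∃ r > (0 : ℝ), ∫⁻ ξ in Metric.ball 0 r, (f ξ)⁻¹ < ∞ := by
  obtain ⟨r, hr, hint⟩ := hgint
  obtain ⟨ε, hε, hball⟩ :=
    Metric.mem_nhdsWithin_iff.mp (eventually_inv_le_two_mul_inv ha hfg hg)
  refine ⟨min r ε, lt_min hr hε, ?_⟩
  have hae : ∀ᵐ ξ ∂volume.restrict (Metric.ball (0 : ℝ) (min r ε)), (f ξ)⁻¹ ≤ 2 * (g ξ)⁻¹ := by
    filter_upwards [ae_restrict_mem measurableSet_ball,
      ae_restrict_of_ae (compl_mem_ae_iff.mpr (measure_singleton (0 : ℝ)))] with ξ hmem hξ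
    exact hball ⟨Metric.ball_subset_ball (min_le_right r ε) hmem, hξ⟩
  calc ∫⁻ ξ in Metric.ball 0 (min r ε), (f ξ)⁻¹
      ≤ ∫⁻ ξ in Metric.ball 0 (min r ε), 2 * (g ξ)⁻¹ := lintegral_mono_ae hae
    _ ≤ 2 * ∫⁻ ξ in Metric.ball 0 r, (g ξ)⁻¹ := by
        rw [lintegral_const_mul' _ _ (by norm_num)]
        exact mul_le_mul_right (lintegral_mono_set (Metric.ball_subset_ball (min_le_left r ε))) 2
    _ < ∞ := ENNReal.mul_lt_top (by norm_num) hint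

end Comparison

section Symbol

variable (c : ℝ → ℝ) (ν : ℝ → Measure ℝ) (x : ℝ)

lemma oneDimSymbol_neg (ξ : ℝ) : oneDimSymbol c ν x (-ξ) = oneDimSymbol c ν x ξ := by
  simp [oneDimSymbol, neg_mul, Real.cos_neg]

lemma oneDimSymbol_two_mul_le (ξ : ℝ) :
    oneDimSymbol c ν x (2 * ξ) ≤ 4 * oneDimSymbol c ν x ξ := by
  have hcos (y : ℝ) : ENNReal.ofReal (1 - Real.cos (2 * ξ * y))
      ≤ 4 * ENNReal.ofReal (1 - Real.cos (ξ * y)) := by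
    rw [← ENNReal.ofReal_ofNat 4, ← ENNReal.ofReal_mul (by norm_num), mul_assoc]
    exact ENNReal.ofReal_le_ofReal (one_sub_cos_two_mul_le _)
  have hdiff : ENNReal.ofReal ((1 / 2) * c x * (2 * ξ) ^ 2)
      = 4 * ENNReal.ofReal ((1 / 2) * c x * ξ ^ 2) := by
    rw [← ENNReal.ofReal_ofNat 4, ← ENNReal.ofReal_mul (by norm_num)]
    ring_nf
  calc oneDimSymbol c ν x (2 * ξ)
      ≤ 4 * ENNReal.ofReal ((1 / 2) * c x * ξ ^ 2) +
          2 * ∫⁻ y in Ioi 0, 4 * ENNReal.ofReal (1 - Real.cos (ξ * y)) ∂(ν x) := by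
        rw [oneDimSymbol, hdiff]
        gcongr with y
        exact hcos y
    _ = 4 * oneDimSymbol c ν x ξ := by
        rw [lintegral_const_mul' _ _ (by norm_num), oneDimSymbol]
        ring

lemma lowerSemicontinuous_oneDimSymbol : LowerSemicontinuous (oneDimSymbol c ν x) := by
  have hint : LowerSemicontinuous fun ξ : ℝ =>
      ∫⁻ y in Ioi 0, ENNReal.ofReal (1 - Real.cos (ξ * y)) ∂(ν x) := by
    refine lowerSemicontinuous_iff_le_liminf.mpr fun ξ => ?_
    calc ∫⁻ y in Ioi 0, ENNReal.ofReal (1 - Real.cos (ξ * y)) ∂(ν x)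
        = ∫⁻ y in Ioi 0, liminf (fun η : ℝ => ENNReal.ofReal (1 - Real.cos (η * y))) (𝓝 ξ)
            ∂(ν x) := by
          refine lintegral_congr fun y => (Tendsto.liminf_eq ?_).symm
          exact (ENNReal.continuous_ofReal.comp (by fun_prop)).tendsto ξ
      _ ≤ _ := lintegral_liminf_le fun η => by fun_prop
  exact (ENNReal.continuous_ofReal.comp (by fun_prop)).lowerSemicontinuous.add
    ((ENNReal.continuous_const_mul (by norm_num)).comp_lowerSemicontinuous hint
      fun _ _ h => mul_le_mul_right h 2)

lemma oneDimSymbol_eq_zero_of_frequently (h : ∃ᶠ η in 𝓝[>] 0, oneDimSymbol c ν x η = 0)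
    (ξ : ℝ) : oneDimSymbol c ν x ξ = 0 := by
  obtain ⟨η, hη, hη0⟩ := exists_seq_forall_of_frequently h
  simp only [oneDimSymbol, add_eq_zero, mul_eq_zero, OfNat.ofNat_ne_zero, false_or,
    ENNReal.ofReal_eq_zero] at hη0 ⊢
  obtain ⟨k, hk⟩ := (hη.eventually self_mem_nhdsWithin).exists
  have hc : c x ≤ 0 := by nlinarith [(hη0 k).1, pow_pos hk 2]
  refine ⟨by nlinarith [sq_nonneg ξ], ?_⟩
  -- `ν x` charges no `y > 0`: otherwise `η k * y ∈ 2πℤ` for all `k` with `η k * y → 0⁺`.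
  have hcos : ∀ᵐ y ∂(ν x).restrict (Ioi 0), ∀ k, Real.cos (η k * y) = 1 := by
    refine ae_all_iff.mpr fun k => ?_
    filter_upwards [(lintegral_eq_zero_iff (by fun_prop)).mp (hη0 k).2] with y hy
    simp only [Pi.zero_apply, ENNReal.ofReal_eq_zero] at hy
    linarith [Real.cos_le_one (η k * y)]
  have hnull : ∀ᵐ y ∂(ν x).restrict (Ioi 0), False := by
    filter_upwards [hcos, ae_restrict_mem measurableSet_Ioi] with y hy hy0
    obtain ⟨k, hk0, hky⟩ := (hη.eventually (Ioo_mem_nhdsGT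
      (div_pos Real.two_pi_pos (mem_Ioi.mp hy0)))).exists
    rw [lt_div_iff₀ (mem_Ioi.mp hy0)] at hky
    exact cos_ne_one_of_pos_of_lt (mul_pos hk0 hy0) hky (hy k)
  exact (lintegral_congr_ae (hnull.mono fun _ h => h.elim)).trans lintegral_zero

end Symbol

section Supremum

variable (c : ℝ → ℝ) (ν : ℝ → Measure ℝ)

lemma iSup_oneDimSymbol_neg (ξ : ℝ) :
    ⨆ x, oneDimSymbol c ν x (-ξ) = ⨆ x, oneDimSymbol c ν x ξ :=
  iSup_congr fun x => oneDimSymbol_neg c ν x ξ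

lemma iSup_oneDimSymbol_two_mul_le (ξ : ℝ) :
    ⨆ x, oneDimSymbol c ν x (2 * ξ) ≤ 4 * ⨆ x, oneDimSymbol c ν x ξ := by
  rw [ENNReal.mul_iSup]
  exact iSup_mono fun x => oneDimSymbol_two_mul_le c ν x ξ

lemma iSup_oneDimSymbol_eq_zero_of_frequently
    (h : ∃ᶠ η in 𝓝[>] 0, ⨆ x, oneDimSymbol c ν x η = 0) (ξ : ℝ) :
    ⨆ x, oneDimSymbol c ν x ξ = 0 :=
  ENNReal.iSup_eq_zero.mpr fun x => oneDimSymbol_eq_zero_of_frequently c ν x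
    (h.mono fun _ hη => ENNReal.iSup_eq_zero.mp hη x) ξ

end Supremum

lemma setLIntegral_Ioc_one_sub_cos_le (μ : Measure ℝ) (m ξ : ℝ) :
    ∫⁻ y in Ioc 0 m, ENNReal.ofReal (1 - Real.cos (ξ * y)) ∂μ ≤
      ENNReal.ofReal (max 1 (m ^ 2) * ξ ^ 2 / 2) *
        ∫⁻ y in Ioi 0, ENNReal.ofReal (min 1 (y ^ 2)) ∂μ := by
  calc ∫⁻ y in Ioc 0 m, ENNReal.ofReal (1 - Real.cos (ξ * y)) ∂μ
      ≤ ∫⁻ y in Ioc 0 m,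
          ENNReal.ofReal (max 1 (m ^ 2) * ξ ^ 2 / 2) * ENNReal.ofReal (min 1 (y ^ 2)) ∂μ := by
        refine setLIntegral_mono (by fun_prop) fun y hy => ?_
        rw [← ENNReal.ofReal_mul (by positivity)]
        refine ENNReal.ofReal_le_ofReal ?_
        have hcos := Real.one_sub_sq_div_two_le_cos (x := ξ * y)
        have hsq := sq_le_max_mul_min hy.1.le hy.2
        nlinarith [sq_nonneg ξ]
    _ ≤ _ := by
        rw [lintegral_const_mul' _ _ ENNReal.ofReal_ne_top]
        gcongr
        exact Ioc_subset_Ioi_self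

lemma oneDimSymbol_le_sq_add (c₁ c₂ : ℝ → ℝ) (ν₁ ν₂ : ℝ → Measure ℝ)
    (hc₂b : ∃ K : ℝ, ∀ x, c₂ x ≤ K)
    (hν₂ : (⨆ x, ∫⁻ y in Ioi (0 : ℝ), ENNReal.ofReal (min 1 (y ^ 2)) ∂(ν₂ x)) < ∞)
    {m : ℝ} (hm : 0 < m)
    (hdom : ∀ x, ∀ B : Set ℝ, MeasurableSet B → ν₂ x (B ∩ Ioi m) ≤ ν₁ x (B ∩ Ioi m)) :
    ∃ a ≠ ∞, ∀ x ξ,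
      oneDimSymbol c₂ ν₂ x ξ ≤ a * ENNReal.ofReal (ξ ^ 2) + oneDimSymbol c₁ ν₁ x ξ := by
  obtain ⟨K, hK⟩ := hc₂b
  set T := ⨆ x, ∫⁻ y in Ioi (0 : ℝ), ENNReal.ofReal (min 1 (y ^ 2)) ∂(ν₂ x)
  refine ⟨ENNReal.ofReal (K / 2) + ENNReal.ofReal (max 1 (m ^ 2)) * T,
    by finiteness, fun x ξ => ?_⟩
  set f := fun y => ENNReal.ofReal (1 - Real.cos (ξ * y))
  have hdiff : ENNReal.ofReal ((1 / 2) * c₂ x * ξ ^ 2)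
      ≤ ENNReal.ofReal (K / 2) * ENNReal.ofReal (ξ ^ 2) := by
    rw [← ENNReal.ofReal_mul' (sq_nonneg ξ)]
    exact ENNReal.ofReal_le_ofReal (by nlinarith [hK x, sq_nonneg ξ])
  have hsmall : 2 * ∫⁻ y in Ioc 0 m, f y ∂(ν₂ x)
      ≤ ENNReal.ofReal (max 1 (m ^ 2)) * T * ENNReal.ofReal (ξ ^ 2) := by
    calc 2 * ∫⁻ y in Ioc 0 m, f y ∂(ν₂ x)
        ≤ 2 * (ENNReal.ofReal (max 1 (m ^ 2) * ξ ^ 2 / 2) * T) := by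
          gcongr
          exact (setLIntegral_Ioc_one_sub_cos_le _ m ξ).trans
            (mul_le_mul_right (le_iSup (fun x' => ∫⁻ y in Ioi (0 : ℝ),
              ENNReal.ofReal (min 1 (y ^ 2)) ∂(ν₂ x')) x) _)
      _ = _ := by
          rw [← mul_assoc, ← ENNReal.ofReal_ofNat 2, ← ENNReal.ofReal_mul (by norm_num),
            mul_div_cancel₀ _ two_ne_zero, ENNReal.ofReal_mul (by positivity)]
          ring
  have hlarge : ∫⁻ y in Ioi m, f y ∂(ν₂ x) ≤ ∫⁻ y in Ioi 0, f y ∂(ν₁ x) := by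
    have hle : (ν₂ x).restrict (Ioi m) ≤ (ν₁ x).restrict (Ioi m) :=
      Measure.le_iff.mpr fun B hB => by
        simpa only [Measure.restrict_apply hB] using hdom x B hB
    exact (lintegral_mono' hle le_rfl).trans (lintegral_mono_set (Ioi_subset_Ioi hm.le))
  calc oneDimSymbol c₂ ν₂ x ξ
      = ENNReal.ofReal ((1 / 2) * c₂ x * ξ ^ 2)
          + 2 * ∫⁻ y in Ioc 0 m, f y ∂(ν₂ x) + 2 * ∫⁻ y in Ioi m, f y ∂(ν₂ x) := by
        rw [oneDimSymbol, ← Ioc_union_Ioi_eq_Ioi hm.le,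
          lintegral_union measurableSet_Ioi (Ioc_disjoint_Ioi le_rfl)]
        ring
    _ ≤ ENNReal.ofReal (K / 2) * ENNReal.ofReal (ξ ^ 2)
          + ENNReal.ofReal (max 1 (m ^ 2)) * T * ENNReal.ofReal (ξ ^ 2)
          + 2 * ∫⁻ y in Ioi 0, f y ∂(ν₁ x) := by
        gcongr
    _ ≤ _ := by
        rw [← add_mul]
        gcongr
        exact le_add_self

theorem stmt12_general (c₁ c₂ : ℝ → ℝ) (ν₁ ν₂ : ℝ → MeasureTheory.Measure ℝ)
    (hc₂b : ∃ K : ℝ, ∀ x, c₂ x ≤ K)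
    (hν₂ : (⨆ x, ∫⁻ y in Set.Ioi (0 : ℝ), ENNReal.ofReal (min 1 (y ^ 2)) ∂(ν₂ x)) < ∞)
    (m : ℝ) (hm : 0 < m)
    (hdom : ∀ x, ∀ B : Set ℝ, MeasurableSet B →
      ν₂ x (B ∩ Set.Ioi m) ≤ ν₁ x (B ∩ Set.Ioi m)) :
    -- (a)
    ((∀ r > (0 : ℝ), ∫⁻ ξ in Metric.ball (0 : ℝ) r,
        (⨆ x, oneDimSymbol c₁ ν₁ x ξ)⁻¹ = ∞) →
      ∀ r > (0 : ℝ), ∫⁻ ξ in Metric.ball (0 : ℝ) r,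
        (⨆ x, oneDimSymbol c₂ ν₂ x ξ)⁻¹ = ∞) ∧
    -- (b)
    ((Tendsto (fun ξ : ℝ => (⨅ x, oneDimSymbol c₂ ν₂ x ξ) / ENNReal.ofReal (ξ ^ 2))
        (𝓝[≠] (0 : ℝ)) (𝓝 ∞)) →
      (∃ r > (0 : ℝ), ∫⁻ ξ in Metric.ball (0 : ℝ) r,
        (⨅ x, oneDimSymbol c₂ ν₂ x ξ)⁻¹ < ∞) →
      (Tendsto (fun ξ : ℝ => (⨅ x, oneDimSymbol c₁ ν₁ x ξ) / ENNReal.ofReal (ξ ^ 2))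
        (𝓝[≠] (0 : ℝ)) (𝓝 ∞)) ∧
      ∃ r > (0 : ℝ), ∫⁻ ξ in Metric.ball (0 : ℝ) r,
        (⨅ x, oneDimSymbol c₁ ν₁ x ξ)⁻¹ < ∞) := by
  obtain ⟨a, ha, hcomp⟩ := oneDimSymbol_le_sq_add c₁ c₂ ν₁ ν₂ hc₂b hν₂ hm hdom
  have hsup (ξ : ℝ) : ⨆ x, oneDimSymbol c₂ ν₂ x ξ
      ≤ a * ENNReal.ofReal (ξ ^ 2) + ⨆ x, oneDimSymbol c₁ ν₁ x ξ :=
    iSup_le fun x => (hcomp x ξ).trans (by gcongr; exact le_iSup (oneDimSymbol c₁ ν₁ · ξ) x)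
  have hinf (ξ : ℝ) : ⨅ x, oneDimSymbol c₂ ν₂ x ξ
      ≤ a * ENNReal.ofReal (ξ ^ 2) + ⨅ x, oneDimSymbol c₁ ν₁ x ξ := by
    rw [ENNReal.add_iInf]
    exact le_iInf fun x => iInf_le_of_le x (hcomp x ξ)
  refine ⟨fun h₁ r hr => ?_, fun h₂ h₂int =>
    ⟨tendsto_div_sq_top_of_le_add ha hinf h₂,
      exists_lintegral_ball_inv_lt_top_of_le_add ha hinf h₂ h₂int⟩⟩
  have hsum := lintegral_ball_inv_sq_add_eq_top (iSup_oneDimSymbol_neg c₁ ν₁)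
    (iSup_oneDimSymbol_two_mul_le c₁ ν₁)
    (lowerSemicontinuous_iSup fun x => lowerSemicontinuous_oneDimSymbol c₁ ν₁ x)
    (iSup_oneDimSymbol_eq_zero_of_frequently c₁ ν₁) ha h₁ hr
  exact top_le_iff.mp (hsum.symm.le.trans (lintegral_mono fun ξ => ENNReal.inv_le_inv' (hsup ξ)))

/-- comparison of the Chung–Fuchs conditions when `ν₁` dominates `ν₂`
outside a compact set (here outside `(m,∞)`'s complement). -/
theorem stmt12 (c₁ c₂ : ℝ → ℝ) (ν₁ ν₂ : ℝ → MeasureTheory.Measure ℝ)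
    (hc₁ : ∀ x, 0 ≤ c₁ x) (hc₂ : ∀ x, 0 ≤ c₂ x)
    (hc₁b : ∃ K : ℝ, ∀ x, c₁ x ≤ K) (hc₂b : ∃ K : ℝ, ∀ x, c₂ x ≤ K)
    (hν₁ : (⨆ x, ∫⁻ y in Set.Ioi (0 : ℝ), ENNReal.ofReal (min 1 (y ^ 2)) ∂(ν₁ x)) < ∞)
    (hν₂ : (⨆ x, ∫⁻ y in Set.Ioi (0 : ℝ), ENNReal.ofReal (min 1 (y ^ 2)) ∂(ν₂ x)) < ∞)
    (m : ℝ) (hm : 0 < m)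
    (hdom : ∀ x, ∀ B : Set ℝ, MeasurableSet B →
      ν₂ x (B ∩ Set.Ioi m) ≤ ν₁ x (B ∩ Set.Ioi m))
    (hms₁ : Measurable fun ξ : ℝ => ⨆ x, oneDimSymbol c₁ ν₁ x ξ)
    (hms₂ : Measurable fun ξ : ℝ => ⨆ x, oneDimSymbol c₂ ν₂ x ξ)
    (hmi₁ : Measurable fun ξ : ℝ => ⨅ x, oneDimSymbol c₁ ν₁ x ξ)
    (hmi₂ : Measurable fun ξ : ℝ => ⨅ x, oneDimSymbol c₂ ν₂ x ξ) :
    -- (a)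
    ((∀ r > (0 : ℝ), ∫⁻ ξ in Metric.ball (0 : ℝ) r,
        (⨆ x, oneDimSymbol c₁ ν₁ x ξ)⁻¹ = ∞) →
      ∀ r > (0 : ℝ), ∫⁻ ξ in Metric.ball (0 : ℝ) r,
        (⨆ x, oneDimSymbol c₂ ν₂ x ξ)⁻¹ = ∞) ∧
    -- (b)
    ((Tendsto (fun ξ : ℝ => (⨅ x, oneDimSymbol c₂ ν₂ x ξ) / ENNReal.ofReal (ξ ^ 2))
        (𝓝[≠] (0 : ℝ)) (𝓝 ∞)) →
      (∃ r > (0 : ℝ), ∫⁻ ξ in Metric.ball (0 : ℝ) r,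
        (⨅ x, oneDimSymbol c₂ ν₂ x ξ)⁻¹ < ∞) →
      (Tendsto (fun ξ : ℝ => (⨅ x, oneDimSymbol c₁ ν₁ x ξ) / ENNReal.ofReal (ξ ^ 2))
        (𝓝[≠] (0 : ℝ)) (𝓝 ∞)) ∧
      ∃ r > (0 : ℝ), ∫⁻ ξ in Metric.ball (0 : ℝ) r,
        (⨅ x, oneDimSymbol c₁ ν₁ x ξ)⁻¹ < ∞) :=
  stmt12_general c₁ c₂ ν₁ ν₂ hc₂b hν₂ m hm hdom
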